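/- arXiv:1203.4388 — 2 statements merged into one kernel-verified Lean document; each statement's English description precedes it below -/
import Mathlib

section
/- Let θ > 0 and let d ∈ ℝ³ be a constant vector with ⟨d,d⟩ = −1 such that ⟨N(s),d⟩ = −cosh θ for all s ∈ I. Then ψ(s)² = coth²θ for all s ∈ I; in particular ψ is a constant function on I with |ψ| > 1. -/
/-- The Lorentzian (Minkowski) inner product on `E₁³ = ℝ³`:
`⟨x,y⟩ = -x₁y₁ + x₂y₂ + x₃y₃`. -/
noncomputable def mdot (x y : Fin 3 → ℝ) : ℝ :=
  -(x 0 * y 0) + x 1 * y 1 + x 2 * y 2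

lemma mdot_hasDerivAt (X : ℝ → Fin 3 → ℝ) (D d : Fin 3 → ℝ) (s : ℝ)
    (h : HasDerivAt X D s) :
    HasDerivAt (fun t => mdot (X t) d) (mdot D d) s := by
  have h0 := (hasDerivAt_pi.mp h) 0
  have h1 := (hasDerivAt_pi.mp h) 1
  have h2 := (hasDerivAt_pi.mp h) 2
  have := ((h0.mul_const (d 0)).neg).add ((h1.mul_const (d 1)).add (h2.mul_const (d 2)))
  have e1 : (fun t => mdot (X t) d) =
      (-fun y => X y 0 * d 0) + ((fun y => X y 1 * d 1) + fun y => X y 2 * d 2) := by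
    funext t; simp only [mdot, Pi.add_apply, Pi.neg_apply]; ring
  have e2 : mdot D d = -(D 0 * d 0) + (D 1 * d 1 + D 2 * d 2) := by
    simp only [mdot]; ring
  rw [e1, e2]; exact this

open Matrix in
lemma gram_expand (t b n d : Fin 3 → ℝ)
    (htt : mdot t t = 1) (hbb : mdot b b = 1) (hnn : mdot n n = -1)
    (htb : mdot t b = 0) (htn : mdot t n = 0) (hbn : mdot b n = 0) :
    (mdot t d)^2 + (mdot b d)^2 - (mdot n d)^2 = mdot d d := by
  classical
  simp only [mdot] at htt hbb hnn htb htn hbn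
  set M : Matrix (Fin 3) (Fin 3) ℝ := Matrix.of ![t, b, n] with hM
  set η : Matrix (Fin 3) (Fin 3) ℝ := !![(-1:ℝ),0,0;0,1,0;0,0,1] with hη
  set G : Matrix (Fin 3) (Fin 3) ℝ := !![(1:ℝ),0,0;0,1,0;0,0,-1] with hG
  have h1 : M * η * Mᵀ = G := by
    ext i j
    fin_cases i <;> fin_cases j <;>
      norm_num [hM, hη, hG, Matrix.mul_apply, Fin.sum_univ_three, Matrix.transpose_apply,
        Matrix.vecHead, Matrix.vecTail, Matrix.cons_val_zero, Matrix.cons_val_one,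
        Matrix.cons_val_two, Matrix.tail_cons, Matrix.head_cons] <;>
      linarith
  have hGG : G * G = 1 := by
    rw [hG, Matrix.mul_fin_three, Matrix.one_fin_three]; norm_num
  have hηη : η * η = 1 := by
    rw [hη, Matrix.mul_fin_three, Matrix.one_fin_three]; norm_num
  have h2 : M * (η * Mᵀ * G) = 1 := by
    calc M * (η * Mᵀ * G) = (M * η * Mᵀ) * G := by simp only [Matrix.mul_assoc]
      _ = G * G := by rw [h1]
      _ = 1 := hGG
  have h3 : (η * Mᵀ * G) * M = 1 := mul_eq_one_comm.mp h2
  have h4 : Mᵀ * G * M = η := by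
    calc Mᵀ * G * M = (η * η) * (Mᵀ * G * M) := by rw [hηη, Matrix.one_mul]
      _ = η * ((η * Mᵀ * G) * M) := by simp only [Matrix.mul_assoc]
      _ = η := by rw [h3, Matrix.mul_one]
  have e : ∀ i j, t i * t j + b i * b j - n i * n j = η i j := by
    intro i j
    have h5 := congrFun (congrFun h4 i) j
    simp only [hM, Matrix.mul_apply, Fin.sum_univ_three, Matrix.transpose_apply, hG,
      Matrix.of_apply, Matrix.cons_val', Matrix.cons_val_zero, Matrix.cons_val_one,
      Matrix.head_cons, Matrix.empty_val', Matrix.cons_val_fin_one, Matrix.head_fin_const,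
      Matrix.vecHead, Matrix.vecTail, Matrix.cons_val_two, Matrix.tail_cons,
      Matrix.cons_val_succ, Function.comp] at h5
    rw [← h5]; ring
  have e00 := e 0 0; have e01 := e 0 1; have e02 := e 0 2
  have e10 := e 1 0; have e11 := e 1 1; have e12 := e 1 2
  have e20 := e 2 0; have e21 := e 2 1; have e22 := e 2 2
  norm_num [hη, Matrix.vecHead, Matrix.vecTail, Matrix.cons_val_zero, Matrix.cons_val_one,
    Matrix.cons_val_two, Matrix.tail_cons, Matrix.head_cons, Matrix.cons_val_succ]
    at e00 e01 e02 e10 e11 e12 e20 e21 e22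
  simp only [mdot]
  linear_combination (d 0 * d 0) * e00 - (d 0 * d 1) * e01 - (d 0 * d 2) * e02
    - (d 1 * d 0) * e10 + (d 1 * d 1) * e11 + (d 1 * d 2) * e12
    - (d 2 * d 0) * e20 + (d 2 * d 1) * e21 + (d 2 * d 2) * e22

/-- If `d` is a constant timelike unit vector with `⟨N,d⟩ = −cosh θ` (`θ > 0`) along
the curve, then `ψ² = coth² θ` on `I`; in particular `ψ` is a constant function on
`I` with `|ψ| > 1`. -/
theorem statement5
    -- the open interval `I`
    (a b : ℝ) (hab : a < b) (I : Set ℝ) (hI : I = Set.Ioo a b)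
    -- the Darboux frame `T, B, N` of a unit-speed spacelike curve on a spacelike
    -- surface, with normal curvature `kn`, geodesic curvature `kg` and geodesic
    -- torsion `τg`
    (T B N : ℝ → Fin 3 → ℝ) (kn kg τg : ℝ → ℝ)
    (hTs : ContDiffOn ℝ (⊤ : ℕ∞) T I) (hBs : ContDiffOn ℝ (⊤ : ℕ∞) B I) (hNs : ContDiffOn ℝ (⊤ : ℕ∞) N I)
    (hkns : ContDiffOn ℝ (⊤ : ℕ∞) kn I) (hkgs : ContDiffOn ℝ (⊤ : ℕ∞) kg I)
    (hτgs : ContDiffOn ℝ (⊤ : ℕ∞) τg I)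
    (hTT : ∀ s ∈ I, mdot (T s) (T s) = 1)
    (hBB : ∀ s ∈ I, mdot (B s) (B s) = 1)
    (hNN : ∀ s ∈ I, mdot (N s) (N s) = -1)
    (hTB : ∀ s ∈ I, mdot (T s) (B s) = 0)
    (hTN : ∀ s ∈ I, mdot (T s) (N s) = 0)
    (hBN : ∀ s ∈ I, mdot (B s) (N s) = 0)
    -- the Darboux frame equations
    (hT' : ∀ s ∈ I, HasDerivAt T (kg s • B s + kn s • N s) s)
    (hB' : ∀ s ∈ I, HasDerivAt B ((-kg s) • T s + τg s • N s) s)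
    (hN' : ∀ s ∈ I, HasDerivAt N (kn s • T s + τg s • B s) s)
    -- `k_n` never vanishes on `I`
    (hkn0 : ∀ s ∈ I, kn s ≠ 0)
    -- `ψ(s) = (k_n²/(k_n² + τ_g²)^{3/2})·(τ_g/k_n)′(s) + k_g(s)/(k_n² + τ_g²)^{1/2}`
    (ψ : ℝ → ℝ)
    (hψ : ∀ s ∈ I, ψ s =
      kn s ^ 2 / Real.sqrt ((kn s ^ 2 + τg s ^ 2) ^ 3) *
        deriv (fun u => τg u / kn u) s +
      kg s / Real.sqrt (kn s ^ 2 + τg s ^ 2))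
    -- `d` is a constant timelike unit vector making constant hyperbolic angle `θ`
    -- with the surface normal `N` along the curve
    (θ : ℝ) (hθ : 0 < θ) (d : Fin 3 → ℝ) (hdd : mdot d d = -1)
    (hNd : ∀ s ∈ I, mdot (N s) d = -Real.cosh θ)
    :
    (∀ s ∈ I, ψ s ^ 2 = (Real.cosh θ / Real.sinh θ) ^ 2) ∧
    (∃ c : ℝ, 1 < |c| ∧ ∀ s ∈ I, ψ s = c) := by
  have hIopen : IsOpen I := hI ▸ isOpen_Ioo
  set C := Real.cosh θ with hCdef
  set S := Real.sinh θ with hSdef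
  have hS : 0 < S := Real.sinh_pos_iff.mpr hθ
  have hC : 0 < C := Real.cosh_pos θ
  have hSC : S < C := by
    rw [hSdef, hCdef, Real.sinh_eq, Real.cosh_eq]
    have := Real.exp_pos (-θ); linarith
  have hCS : C ^ 2 = S ^ 2 + 1 := Real.cosh_sq θ
  set U : ℝ → ℝ := fun t => mdot (T t) d with hUdef
  set V : ℝ → ℝ := fun t => mdot (B t) d with hVdef
  -- U² + V² = S²
  have hA : ∀ s ∈ I, U s ^ 2 + V s ^ 2 = S ^ 2 := by
    intro s hs
    have h := gram_expand (T s) (B s) (N s) d (hTT s hs) (hBB s hs) (hNN s hs)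
      (hTB s hs) (hTN s hs) (hBN s hs)
    rw [hNd s hs, hdd] at h
    simp only [hUdef, hVdef]
    nlinarith [h, hCS]
  -- kn U + τg V = 0
  have hrel : ∀ s ∈ I, kn s * U s + τg s * V s = 0 := by
    intro s hs
    have hN'd := mdot_hasDerivAt N _ d s (hN' s hs)
    have hval : mdot (kn s • T s + τg s • B s) d = kn s * U s + τg s * V s := by
      simp only [hUdef, hVdef, mdot, Pi.add_apply, Pi.smul_apply, smul_eq_mul]; ring
    rw [hval] at hN'd
    have hmem : I ∈ nhds s := hIopen.mem_nhds hs
    have hconst : HasDerivAt (fun t => mdot (N t) d) 0 s :=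
      (hasDerivAt_const s (-C)).congr_of_eventuallyEq
        (Filter.eventually_of_mem hmem fun t ht => hNd t ht)
    exact hN'd.unique hconst
  -- V never vanishes
  have hVne : ∀ s ∈ I, V s ≠ 0 := by
    intro s hs h0
    have h1 := hrel s hs
    rw [h0, mul_zero, add_zero] at h1
    have hU0 : U s = 0 := by
      rcases mul_eq_zero.mp h1 with h | h
      · exact absurd h (hkn0 s hs)
      · exact h
    have h2 := hA s hs
    rw [h0, hU0] at h2
    nlinarith
  have hq : ∀ s ∈ I, 0 < kn s ^ 2 + τg s ^ 2 := by
    intro s hs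
    have h1 : 0 < kn s ^ 2 :=
      lt_of_le_of_ne (sq_nonneg _) (Ne.symm (pow_ne_zero 2 (hkn0 s hs)))
    nlinarith [sq_nonneg (τg s)]
  -- closed form for ψ
  have hform : ∀ s ∈ I, ψ s = C * kn s / (Real.sqrt (kn s ^ 2 + τg s ^ 2) * V s) := by
    intro s hs
    have hmem : I ∈ nhds s := hIopen.mem_nhds hs
    have hu : HasDerivAt U (kg s * V s - kn s * C) s := by
      have h := mdot_hasDerivAt T _ d s (hT' s hs)
      have hval : mdot (kg s • B s + kn s • N s) d = kg s * V s + kn s * mdot (N s) d := by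
        simp only [hVdef, mdot, Pi.add_apply, Pi.smul_apply, smul_eq_mul]; ring
      rw [hval, hNd s hs] at h
      convert h using 1; ring
    have hv : HasDerivAt V (-(kg s) * U s - τg s * C) s := by
      have h := mdot_hasDerivAt B _ d s (hB' s hs)
      have hval : mdot ((-kg s) • T s + τg s • N s) d = (-kg s) * U s + τg s * mdot (N s) d := by
        simp only [hUdef, mdot, Pi.add_apply, Pi.smul_apply, smul_eq_mul]; ring
      rw [hval, hNd s hs] at h
      convert h using 1; ring
    have heq : (fun t => τg t / kn t) =ᶠ[nhds s] (fun t => -U t / V t) := by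
      filter_upwards [hmem] with t ht
      have h1 := hrel t ht
      have hk := hkn0 t ht
      have hV := hVne t ht
      field_simp
      linear_combination h1
    have hdiv := (hu.neg).div hv (hVne s hs)
    have hderiv : deriv (fun u => τg u / kn u) s =
        (-(kg s * V s - kn s * C) * V s - -U s * (-(kg s) * U s - τg s * C)) / V s ^ 2 := by
      rw [Filter.EventuallyEq.deriv_eq heq]
      exact hdiv.deriv
    have hq' := hq s hs
    have hV' := hVne s hs
    have hk' := hkn0 s hs
    set r := Real.sqrt (kn s ^ 2 + τg s ^ 2) with hrdef
    have hr : 0 < r := Real.sqrt_pos.mpr hq'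
    have hr2 : r ^ 2 = kn s ^ 2 + τg s ^ 2 := Real.sq_sqrt hq'.le
    have hr3 : Real.sqrt ((kn s ^ 2 + τg s ^ 2) ^ 3) = r ^ 3 := by
      rw [show (kn s ^ 2 + τg s ^ 2) ^ 3 = (r ^ 3) ^ 2 by rw [← hr2]; ring]
      exact Real.sqrt_sq (by positivity)
    have hV2 : (kn s ^ 2 + τg s ^ 2) * V s ^ 2 = S ^ 2 * kn s ^ 2 := by
      linear_combination (kn s ^ 2) * hA s hs + (τg s * V s - kn s * U s) * hrel s hs
    rw [hψ s hs, hderiv, hr3]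
    have hAs := hA s hs
    have hrels := hrel s hs
    rw [← hrdef]
    rw [div_mul_div_comm, div_add_div _ _ (mul_ne_zero (pow_ne_zero 3 hr.ne') (pow_ne_zero 2 hV'))
      hr.ne', div_eq_div_iff (mul_ne_zero (mul_ne_zero (pow_ne_zero 3 hr.ne') (pow_ne_zero 2 hV'))
      hr.ne') (mul_ne_zero hr.ne' hV')]
    linear_combination r ^ 2 * V s * ((V s ^ 2 * kg s - C * kn s * V s) * hr2
      - kg s * kn s ^ 2 * hAs + kg s * hV2 - C * kn s * τg s * hrels)
  -- squares
  have hsq : ∀ s ∈ I, ψ s ^ 2 = (C / S) ^ 2 := by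
    intro s hs
    rw [hform s hs]
    have hq' := hq s hs
    have hV' := hVne s hs
    have hr : 0 < Real.sqrt (kn s ^ 2 + τg s ^ 2) := Real.sqrt_pos.mpr hq'
    have hr2 : Real.sqrt (kn s ^ 2 + τg s ^ 2) ^ 2 = kn s ^ 2 + τg s ^ 2 :=
      Real.sq_sqrt hq'.le
    have hV2 : (kn s ^ 2 + τg s ^ 2) * V s ^ 2 = S ^ 2 * kn s ^ 2 := by
      linear_combination (kn s ^ 2) * hA s hs + (τg s * V s - kn s * U s) * hrel s hs
    rw [div_pow, div_pow, div_eq_div_iff (pow_ne_zero 2 (mul_ne_zero hr.ne' hV'))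
      (pow_ne_zero 2 hS.ne')]
    linear_combination (-(C ^ 2 * V s ^ 2)) * hr2 - C ^ 2 * hV2
  refine ⟨hsq, ?_⟩
  -- continuity of ψ on I
  have hVcont : ContinuousOn V I := by
    have hB := hBs.continuousOn
    have hcomp : ∀ i : Fin 3, ContinuousOn (fun t => B t i) I := fun i =>
      (continuous_apply i).comp_continuousOn hB
    have : ContinuousOn (fun t => -(B t 0 * d 0) + B t 1 * d 1 + B t 2 * d 2) I :=
      ((((hcomp 0).mul continuousOn_const).neg).add
        ((hcomp 1).mul continuousOn_const)).add ((hcomp 2).mul continuousOn_const)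
    exact this.congr fun t ht => by simp only [hVdef, mdot]
  have hψcont : ContinuousOn ψ I := by
    have hF : ContinuousOn (fun s => C * kn s / (Real.sqrt (kn s ^ 2 + τg s ^ 2) * V s)) I := by
      apply ContinuousOn.div
      · exact continuousOn_const.mul hkns.continuousOn
      · exact (Real.continuous_sqrt.comp_continuousOn
          (((hkns.continuousOn.pow 2)).add (hτgs.continuousOn.pow 2))).mul hVcont
      · intro s hs
        exact mul_ne_zero (Real.sqrt_pos.mpr (hq s hs)).ne' (hVne s hs)
    exact hF.congr fun s hs => hform s hs
  -- the constant
  have hs0 : (a + b) / 2 ∈ I := by rw [hI, Set.mem_Ioo]; constructor <;> linarith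
  set c := ψ ((a + b) / 2) with hcdef
  have hc2 : c ^ 2 = (C / S) ^ 2 := hsq _ hs0
  have hCS1 : 1 < C / S := (one_lt_div hS).mpr hSC
  have habs : 1 < |c| := by
    nlinarith [sq_abs c, abs_nonneg c]
  have hcne : c ≠ 0 := by
    intro h; rw [h, abs_zero] at habs; linarith
  refine ⟨c, habs, ?_⟩
  intro s hs
  by_contra hne
  have h1 : ψ s ^ 2 = c ^ 2 := (hsq s hs).trans hc2.symm
  have h2 : ψ s = -c := by
    have h3 : (ψ s - c) * (ψ s + c) = 0 := by linear_combination h1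
    rcases mul_eq_zero.mp h3 with h | h
    · exact absurd (by linarith) hne
    · linarith
  have hpre : IsPreconnected (ψ '' I) :=
    (hI ▸ isPreconnected_Ioo).image ψ (hI ▸ hψcont)
  have hord := hpre.ordConnected
  have hm1 : c ∈ ψ '' I := ⟨(a + b) / 2, hs0, rfl⟩
  have hm2 : -c ∈ ψ '' I := ⟨s, hs, h2⟩
  have h0 : (0 : ℝ) ∈ ψ '' I := by
    rcases lt_or_gt_of_ne hcne with hneg | hpos
    · exact hord.out hm1 hm2 ⟨le_of_lt hneg, by linarith⟩
    · exact hord.out hm2 hm1 ⟨by linarith, le_of_lt hpos⟩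
  obtain ⟨t, ht, ht0⟩ := h0
  have := hsq t ht
  rw [ht0] at this
  have : (C / S) ^ 2 = 0 := by linarith [this]
  nlinarith [hCS1]
end

section
/- (Theorem on isophotes with spacelike axis) The curve α is an isophote curve with a spacelike axis — i.e., there exist θ ∈ ℝ and a constant vector d ∈ ℝ³ with ⟨d,d⟩ = 1 such that ⟨N(s),d⟩ = sinh θ for all s ∈ I — if and only if ψ is a constant function on I with |ψ| < 1; in that case ψ² = tanh²θ. -/
lemma mdot_comm (x y : Fin 3 → ℝ) : mdot x y = mdot y x := by simp [mdot]; ring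

lemma hasDerivAt_mdot {f g : ℝ → Fin 3 → ℝ} {f' g' : Fin 3 → ℝ} {s : ℝ}
    (hf : HasDerivAt f f' s) (hg : HasDerivAt g g' s) :
    HasDerivAt (fun u => mdot (f u) (g u)) (mdot f' (g s) + mdot (f s) g') s := by
  have hf0 := (hasDerivAt_pi.1 hf) 0
  have hf1 := (hasDerivAt_pi.1 hf) 1
  have hf2 := (hasDerivAt_pi.1 hf) 2
  have hg0 := (hasDerivAt_pi.1 hg) 0
  have hg1 := (hasDerivAt_pi.1 hg) 1
  have hg2 := (hasDerivAt_pi.1 hg) 2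
  have := (((hf0.mul hg0).neg.add (hf1.mul hg1)).add (hf2.mul hg2))
  refine this.congr_deriv (Eq.symm ?_)
  simp [mdot]; ring

lemma mdot_combo (t b n : Fin 3 → ℝ)
    (h1 : mdot t t = 1) (h2 : mdot b b = 1) (h3 : mdot n n = -1)
    (h4 : mdot t b = 0) (h5 : mdot t n = 0) (h6 : mdot b n = 0)
    (x y z x' y' z' : ℝ) :
    mdot (x • t + y • b + z • n) (x' • t + y' • b + z' • n) = x*x' + y*y' - z*z' := by
  simp only [mdot, Pi.add_apply, Pi.smul_apply, smul_eq_mul] at *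
  linear_combination (x*x') * h1 + (y*y') * h2 + (z*z') * h3
    + (x*y' + y*x') * h4 + (x*z' + z*x') * h5 + (y*z' + z*y') * h6

lemma mdot_decomp (t b n d : Fin 3 → ℝ)
    (h1 : mdot t t = 1) (h2 : mdot b b = 1) (h3 : mdot n n = -1)
    (h4 : mdot t b = 0) (h5 : mdot t n = 0) (h6 : mdot b n = 0) :
    mdot d d = mdot t d ^ 2 + mdot b d ^ 2 - mdot n d ^ 2 := by
  obtain ⟨α, β, γ, hd⟩ : ∃ α β γ : ℝ, ∀ j, d j = α * t j + β * b j + γ * n j := by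
    classical
    set P : Matrix (Fin 3) (Fin 3) ℝ := Matrix.of ![t, b, n] with hP
    have hη : P * (Matrix.diagonal ![(-1:ℝ),1,1]) * P.transpose
        = Matrix.diagonal ![(1:ℝ),1,-1] := by
      ext i j
      simp only [mdot] at h1 h2 h3 h4 h5 h6
      fin_cases i <;> fin_cases j <;>
        simp [Matrix.mul_apply, Fin.sum_univ_three, Matrix.diagonal_apply,
          Matrix.transpose_apply, hP, Fin.ext_iff, Matrix.vecMul, Matrix.vecHead,
          Matrix.vecTail, dotProduct, Function.comp, Matrix.cons_val_zero,
          Matrix.cons_val_one, Matrix.head_cons] <;>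
        linarith
    have hdet : P.det ^ 2 = 1 := by
      have := congrArg Matrix.det hη
      rw [Matrix.det_mul, Matrix.det_mul, Matrix.det_transpose,
        Matrix.det_diagonal, Matrix.det_diagonal] at this
      simp [Fin.prod_univ_three] at this
      nlinarith [this]
    have hunit : IsUnit (P.transpose).det := by
      rw [Matrix.det_transpose]
      refine isUnit_iff_ne_zero.2 ?_
      intro h0; rw [h0] at hdet; norm_num at hdet
    set v := (P.transpose)⁻¹.mulVec d with hv
    have hsol : (P.transpose).mulVec v = d := by
      rw [hv, Matrix.mulVec_mulVec, Matrix.mul_nonsing_inv _ hunit, Matrix.one_mulVec]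
    refine ⟨v 0, v 1, v 2, fun j => ?_⟩
    have := congrFun hsol j
    rw [← this]
    simp [Matrix.mulVec, dotProduct, Fin.sum_univ_three, hP]
    ring
  have ht : mdot t d = α := by
    simp only [mdot, hd] at *
    linear_combination α * h1 + β * h4 + γ * h5
  have hb : mdot b d = β := by
    simp only [mdot, hd] at *
    linear_combination α * h4 + β * h2 + γ * h6
  have hn : mdot n d = -γ := by
    simp only [mdot, hd] at *
    linear_combination α * h5 + β * h6 + γ * h3
  have hdd : mdot d d = α^2 + β^2 - γ^2 := by
    simp only [mdot, hd] at *
    linear_combination (α^2) * h1 + (β^2) * h2 + (γ^2) * h3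
      + (2*α*β) * h4 + (2*α*γ) * h5 + (2*β*γ) * h6
  rw [ht, hb, hn, hdd]; ring

lemma const_of_hasDerivAt_zero {E : Type*} [NormedAddCommGroup E] [NormedSpace ℝ E]
    {f : ℝ → E} {s : Set ℝ} (hs : IsOpen s) (hconv : Convex ℝ s)
    (hf : ∀ x ∈ s, HasDerivAt f 0 x) {x y : ℝ} (hx : x ∈ s) (hy : y ∈ s) :
    f x = f y := by
  refine hconv.is_const_of_fderivWithin_eq_zero
    (fun z hz => ((hf z hz).differentiableAt).differentiableWithinAt) ?_ hx hy
  intro z hz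
  rw [fderivWithin_of_mem_nhds (hs.mem_nhds hz)]
  rw [(hf z hz).hasFDerivAt.fderiv]
  refine ContinuousLinearMap.ext fun w => ?_
  simp [ContinuousLinearMap.smulRight_apply]

lemma mdot_zero_right (x : Fin 3 → ℝ) : mdot x 0 = 0 := by simp [mdot]

lemma mdot_expand_right (x t b n : Fin 3 → ℝ) (p q r : ℝ) :
    mdot x (p • t + q • b + r • n) = p * mdot x t + q * mdot x b + r * mdot x n := by
  simp [mdot]; ring

lemma mdot_expand_left (x t b n : Fin 3 → ℝ) (p q r : ℝ) :
    mdot (p • t + q • b + r • n) x = p * mdot t x + q * mdot b x + r * mdot n x := by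
  simp [mdot]; ring

lemma sqrt_cube {x : ℝ} (hx : 0 ≤ x) : Real.sqrt (x^3) = Real.sqrt x ^ 3 := by
  have h1 : (0:ℝ) ≤ Real.sqrt x ^ 3 := by positivity
  rw [← Real.sqrt_sq h1]
  congr 1
  have h2 := Real.sq_sqrt hx
  linear_combination (-(x^2) - x * Real.sqrt x ^ 2 - Real.sqrt x ^ 4) * h2


set_option maxHeartbeats 1000000 in
/-- **Theorem (isophotes with spacelike axis).** The curve `α` is an isophote curve
with a spacelike axis — there exist `θ ∈ ℝ` and a constant vector `d` with
`⟨d,d⟩ = 1` and `⟨N,d⟩ = sinh θ` along the curve — if and only if `ψ` is a constant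
function on `I` with `|ψ| < 1`; in that case `ψ² = tanh² θ`. -/
theorem statement15
    -- the open interval `I`
    (a b : ℝ) (hab : a < b) (I : Set ℝ) (hI : I = Set.Ioo a b)
    -- the Darboux frame `T, B, N` of a unit-speed spacelike curve on a spacelike
    -- surface, with normal curvature `kn`, geodesic curvature `kg` and geodesic
    -- torsion `τg`
    (T B N : ℝ → Fin 3 → ℝ) (kn kg τg : ℝ → ℝ)
    (hTs : ContDiffOn ℝ (⊤ : ℕ∞) T I) (hBs : ContDiffOn ℝ (⊤ : ℕ∞) B I) (hNs : ContDiffOn ℝ (⊤ : ℕ∞) N I)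
    (hkns : ContDiffOn ℝ (⊤ : ℕ∞) kn I) (hkgs : ContDiffOn ℝ (⊤ : ℕ∞) kg I)
    (hτgs : ContDiffOn ℝ (⊤ : ℕ∞) τg I)
    (hTT : ∀ s ∈ I, mdot (T s) (T s) = 1)
    (hBB : ∀ s ∈ I, mdot (B s) (B s) = 1)
    (hNN : ∀ s ∈ I, mdot (N s) (N s) = -1)
    (hTB : ∀ s ∈ I, mdot (T s) (B s) = 0)
    (hTN : ∀ s ∈ I, mdot (T s) (N s) = 0)
    (hBN : ∀ s ∈ I, mdot (B s) (N s) = 0)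
    -- the Darboux frame equations
    (hT' : ∀ s ∈ I, HasDerivAt T (kg s • B s + kn s • N s) s)
    (hB' : ∀ s ∈ I, HasDerivAt B ((-kg s) • T s + τg s • N s) s)
    (hN' : ∀ s ∈ I, HasDerivAt N (kn s • T s + τg s • B s) s)
    -- `k_n` never vanishes on `I`
    (hkn0 : ∀ s ∈ I, kn s ≠ 0)
    -- `ψ(s) = (k_n²/(k_n² + τ_g²)^{3/2})·(τ_g/k_n)′(s) + k_g(s)/(k_n² + τ_g²)^{1/2}`
    (ψ : ℝ → ℝ)
    (hψ : ∀ s ∈ I, ψ s =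
      kn s ^ 2 / Real.sqrt ((kn s ^ 2 + τg s ^ 2) ^ 3) *
        deriv (fun u => τg u / kn u) s +
      kg s / Real.sqrt (kn s ^ 2 + τg s ^ 2))
    :
    ((∃ θ : ℝ, ∃ d : Fin 3 → ℝ, mdot d d = 1 ∧
        ∀ s ∈ I, mdot (N s) d = Real.sinh θ) ↔
      (∃ c : ℝ, |c| < 1 ∧ ∀ s ∈ I, ψ s = c)) ∧
    (∀ θ : ℝ, ∀ d : Fin 3 → ℝ, mdot d d = 1 →
      (∀ s ∈ I, mdot (N s) d = Real.sinh θ) →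
      ∀ s ∈ I, ψ s ^ 2 = Real.tanh θ ^ 2) := by
  subst hI
  have hO : IsOpen (Set.Ioo a b) := isOpen_Ioo
  have hC : Convex ℝ (Set.Ioo a b) := convex_Ioo a b
  -- basic derivative facts
  have hkn' : ∀ s ∈ Set.Ioo a b, HasDerivAt kn (deriv kn s) s := fun s hs =>
    ((hkns.differentiableOn (by simp)).differentiableAt (hO.mem_nhds hs)).hasDerivAt
  have hτg' : ∀ s ∈ Set.Ioo a b, HasDerivAt τg (deriv τg s) s := fun s hs =>
    ((hτgs.differentiableOn (by simp)).differentiableAt (hO.mem_nhds hs)).hasDerivAt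
  have hpos : ∀ s ∈ Set.Ioo a b, 0 < kn s ^ 2 + τg s ^ 2 := fun s hs => by
    have h := hkn0 s hs; positivity
  set r : ℝ → ℝ := fun u => Real.sqrt (kn u ^ 2 + τg u ^ 2) with hrdef
  have hrpos : ∀ s ∈ Set.Ioo a b, 0 < r s := fun s hs => Real.sqrt_pos.2 (hpos s hs)
  have hr2 : ∀ s ∈ Set.Ioo a b, r s ^ 2 = kn s ^ 2 + τg s ^ 2 := fun s hs =>
    Real.sq_sqrt (hpos s hs).le
  have hD : ∀ s ∈ Set.Ioo a b, HasDerivAt (fun u => τg u / kn u)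
      ((deriv τg s * kn s - τg s * deriv kn s) / kn s ^ 2) s := fun s hs =>
    (hτg' s hs).div (hkn' s hs) (hkn0 s hs)
  -- ψ multiplied out
  have hstar : ∀ s ∈ Set.Ioo a b, ψ s * r s ^ 3 =
      (deriv τg s * kn s - τg s * deriv kn s) + kg s * r s ^ 2 := by
    intro s hs
    have h1 := hψ s hs
    rw [(hD s hs).deriv, sqrt_cube (hpos s hs).le] at h1
    have hrs : Real.sqrt (kn s ^ 2 + τg s ^ 2) = r s := rfl
    rw [hrs] at h1
    have hrne := (hrpos s hs).ne'
    have hkne := hkn0 s hs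
    have hr2s := hr2 s hs
    field_simp at h1
    have hgoal' : ψ s * r s ^ 3 * (r s * kn s ^ 2) =
        ((deriv τg s * kn s - τg s * deriv kn s) + kg s * r s ^ 2) * (r s * kn s ^ 2) := by
      linear_combination (r s * kn s ^ 2) * h1
    exact mul_right_cancel₀ (mul_ne_zero hrne (pow_ne_zero 2 hkne)) hgoal'
  -- the key forward computation
  have key : ∀ θ : ℝ, ∀ d : Fin 3 → ℝ, mdot d d = 1 →
      (∀ s ∈ Set.Ioo a b, mdot (N s) d = Real.sinh θ) →
      ∀ s ∈ Set.Ioo a b,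
        mdot (B s) d ≠ 0 ∧
        (mdot (B s) d) ^ 2 * (kn s ^ 2 + τg s ^ 2) = Real.cosh θ ^ 2 * kn s ^ 2 ∧
        ψ s * (mdot (B s) d * r s) = -(Real.sinh θ * kn s) := by
    intro θ d hdd hNd s hs
    have hNf : ∀ u ∈ Set.Ioo a b, HasDerivAt (fun v => mdot (N v) d)
        (kn u * mdot (T u) d + τg u * mdot (B u) d) u := by
      intro u hu
      have h := hasDerivAt_mdot (hN' u hu) (hasDerivAt_const u d)
      convert h using 1
      rw [mdot_zero_right]
      have : kn u • T u + τg u • B u = kn u • T u + τg u • B u + (0:ℝ) • N u := by simp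
      rw [this, mdot_expand_left]
      ring
    have hNzero : ∀ u ∈ Set.Ioo a b,
        kn u * mdot (T u) d + τg u * mdot (B u) d = 0 := by
      intro u hu
      have h2 : HasDerivAt (fun v => mdot (N v) d) 0 u := by
        refine HasDerivAt.congr_of_eventuallyEq (hasDerivAt_const u (Real.sinh θ)) ?_
        filter_upwards [hO.mem_nhds hu] with v hv
        exact hNd v hv
      exact (hNf u hu).unique h2
    have hnorm : ∀ u ∈ Set.Ioo a b,
        (mdot (T u) d) ^ 2 + (mdot (B u) d) ^ 2 = Real.cosh θ ^ 2 := by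
      intro u hu
      have h := mdot_decomp (T u) (B u) (N u) d (hTT u hu) (hBB u hu) (hNN u hu)
        (hTB u hu) (hTN u hu) (hBN u hu)
      rw [hdd, hNd u hu] at h
      have hc := Real.cosh_sq θ
      nlinarith [h]
    have hA_eq : ∀ u ∈ Set.Ioo a b,
        mdot (T u) d = -(τg u / kn u) * mdot (B u) d := by
      intro u hu
      have h := hNzero u hu
      have hk := hkn0 u hu
      field_simp
      linear_combination h
    have hk := hkn0 s hs
    have hrne := (hrpos s hs).ne'
    have hr2s := hr2 s hs
    have hb2 : (mdot (B s) d) ^ 2 * (kn s ^ 2 + τg s ^ 2) = Real.cosh θ ^ 2 * kn s ^ 2 := by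
      have h1 := hnorm s hs
      have h2 := hA_eq s hs
      rw [h2] at h1
      field_simp at h1
      linear_combination h1
    have hbne : mdot (B s) d ≠ 0 := by
      intro h0
      rw [h0] at hb2
      have hpos2 : 0 < Real.cosh θ ^ 2 * kn s ^ 2 := by positivity
      nlinarith [hb2, hpos2]
    refine ⟨hbne, hb2, ?_⟩
    have hBf : HasDerivAt (fun v => mdot (B v) d)
        (-kg s * mdot (T s) d + τg s * Real.sinh θ) s := by
      have h := hasDerivAt_mdot (hB' s hs) (hasDerivAt_const s d)
      convert h using 1
      rw [mdot_zero_right]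
      rw [show -kg s • T s + τg s • N s = (-kg s) • T s + (0:ℝ) • B s + τg s • N s by simp,
        mdot_expand_left, hNd s hs]
      ring
    have hTf : HasDerivAt (fun v => mdot (T v) d)
        (kg s * mdot (B s) d + kn s * Real.sinh θ) s := by
      have h := hasDerivAt_mdot (hT' s hs) (hasDerivAt_const s d)
      convert h using 1
      rw [mdot_zero_right]
      rw [show kg s • B s + kn s • N s = (0:ℝ) • T s + kg s • B s + kn s • N s by simp,
        mdot_expand_left, hNd s hs]
      ring
    have halt : HasDerivAt (fun v => mdot (T v) d)
        (-((deriv τg s * kn s - τg s * deriv kn s) / kn s ^ 2) * mdot (B s) d +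
          -(τg s / kn s) * (-kg s * mdot (T s) d + τg s * Real.sinh θ)) s := by
      have h := (hD s hs).neg.mul hBf
      refine h.congr_of_eventuallyEq ?_
      filter_upwards [hO.mem_nhds hs] with v hv
      exact hA_eq v hv
    have heq := hTf.unique halt
    have hA := hA_eq s hs
    rw [hA] at heq
    field_simp at heq
    have hst := hstar s hs
    have hmain : mdot (B s) d *
        ((deriv τg s * kn s - τg s * deriv kn s) + kg s * (kn s ^ 2 + τg s ^ 2)) =
        -(Real.sinh θ * kn s * (kn s ^ 2 + τg s ^ 2)) := by
      have h2 : mdot (B s) d *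
          ((deriv τg s * kn s - τg s * deriv kn s) + kg s * (kn s ^ 2 + τg s ^ 2)) * kn s ^ 2 =
          -(Real.sinh θ * kn s * (kn s ^ 2 + τg s ^ 2)) * kn s ^ 2 := by
        linear_combination kn s ^ 2 * heq
      exact mul_right_cancel₀ (pow_ne_zero 2 hk) h2
    have hgoal' : ψ s * (mdot (B s) d * r s) * r s ^ 2 =
        -(Real.sinh θ * kn s) * r s ^ 2 := by
      linear_combination (mdot (B s) d) * hst +
        (mdot (B s) d * kg s + Real.sinh θ * kn s) * hr2s + hmain
    exact mul_right_cancel₀ (pow_ne_zero 2 hrne) hgoal'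
  constructor
  · constructor
    · rintro ⟨θ, d, hdd, hNd⟩
      set w : ℝ → ℝ := fun u => mdot (B u) d * r u / kn u with hwdef
      have hwcont : ContinuousOn w (Set.Ioo a b) := by
        have hB0 : ContinuousOn (fun u => B u 0) (Set.Ioo a b) :=
          (continuous_apply (0 : Fin 3)).comp_continuousOn hBs.continuousOn
        have hB1 : ContinuousOn (fun u => B u 1) (Set.Ioo a b) :=
          (continuous_apply (1 : Fin 3)).comp_continuousOn hBs.continuousOn
        have hB2 : ContinuousOn (fun u => B u 2) (Set.Ioo a b) :=
          (continuous_apply (2 : Fin 3)).comp_continuousOn hBs.continuousOn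
        have hBc : ContinuousOn (fun u => mdot (B u) d) (Set.Ioo a b) := by
          simp only [mdot]
          exact (((hB0.mul continuousOn_const).neg).add
            (hB1.mul continuousOn_const)).add (hB2.mul continuousOn_const)
        have hrc : ContinuousOn r (Set.Ioo a b) :=
          Real.continuous_sqrt.comp_continuousOn
            (((hkns.continuousOn).pow 2).add ((hτgs.continuousOn).pow 2))
        exact (hBc.mul hrc).div hkns.continuousOn hkn0
      have hw2 : ∀ u ∈ Set.Ioo a b, w u ^ 2 = Real.cosh θ ^ 2 := by
        intro u hu
        obtain ⟨hbne, hb2, hmain⟩ := key θ d hdd hNd u hu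
        have hk := hkn0 u hu
        have hr2u := hr2 u hu
        rw [hwdef]
        simp only
        rw [div_pow, mul_pow, hr2u]
        rw [hb2]
        field_simp
      have hwne : ∀ u ∈ Set.Ioo a b, w u ≠ 0 := by
        intro u hu h0
        have := hw2 u hu
        rw [h0] at this
        have := Real.cosh_pos θ
        nlinarith
      have hψw : ∀ u ∈ Set.Ioo a b, ψ u * w u = -Real.sinh θ := by
        intro u hu
        obtain ⟨hbne, hb2, hmain⟩ := key θ d hdd hNd u hu
        have hk := hkn0 u hu
        rw [hwdef]
        simp only
        field_simp
        linear_combination hmain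
      have hpm : ∀ u ∈ Set.Ioo a b, w u = Real.cosh θ ∨ w u = -Real.cosh θ := by
        intro u hu
        have h := hw2 u hu
        have h2 : (w u - Real.cosh θ) * (w u + Real.cosh θ) = 0 := by linear_combination h
        rcases mul_eq_zero.1 h2 with h3 | h3
        · left; linarith
        · right; linarith
      have hcosh := Real.cosh_pos θ
      have hdich : (∀ u ∈ Set.Ioo a b, w u = Real.cosh θ) ∨
          (∀ u ∈ Set.Ioo a b, w u = -Real.cosh θ) := by
        by_contra hcon
        push_neg at hcon
        obtain ⟨⟨s₁, hs₁, hv1'⟩, ⟨s₂, hs₂, hv2'⟩⟩ := hcon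
        have hv1 : w s₁ = -Real.cosh θ := (hpm s₁ hs₁).resolve_left hv1'
        have hv2 : w s₂ = Real.cosh θ := (hpm s₂ hs₂).resolve_right hv2'
        rcases le_total s₁ s₂ with hle | hle
        · have hsub : Set.Icc s₁ s₂ ⊆ Set.Ioo a b := fun x hx =>
            ⟨lt_of_lt_of_le hs₁.1 hx.1, lt_of_le_of_lt hx.2 hs₂.2⟩
          have him := intermediate_value_Icc hle (hwcont.mono hsub)
          have h0mem : (0:ℝ) ∈ Set.Icc (w s₁) (w s₂) := by
            rw [hv1, hv2]; constructor <;> linarith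
          obtain ⟨x, hx, hx0⟩ := him h0mem
          exact hwne x (hsub hx) hx0
        · have hsub : Set.Icc s₂ s₁ ⊆ Set.Ioo a b := fun x hx =>
            ⟨lt_of_lt_of_le hs₂.1 hx.1, lt_of_le_of_lt hx.2 hs₁.2⟩
          have him := intermediate_value_Icc' hle (hwcont.mono hsub)
          have h0mem : (0:ℝ) ∈ Set.Icc (w s₁) (w s₂) := by
            rw [hv1, hv2]; constructor <;> linarith
          obtain ⟨x, hx, hx0⟩ := him h0mem
          exact hwne x (hsub hx) hx0
      have habs : |Real.sinh θ| < Real.cosh θ := by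
        have h1 := Real.cosh_sq θ
        nlinarith [sq_abs (Real.sinh θ), abs_nonneg (Real.sinh θ)]
      obtain hcase | hcase := hdich
      · refine ⟨-Real.sinh θ / Real.cosh θ, ?_, ?_⟩
        · rw [abs_div, abs_of_pos hcosh, div_lt_one hcosh, abs_neg]
          exact habs
        · intro u hu
          have h1 := hψw u hu
          rw [hcase u hu] at h1
          field_simp at h1 ⊢
          linarith [h1]
      · refine ⟨Real.sinh θ / Real.cosh θ, ?_, ?_⟩
        · rw [abs_div, abs_of_pos hcosh, div_lt_one hcosh]
          exact habs
        · intro u hu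
          have h1 := hψw u hu
          rw [hcase u hu] at h1
          field_simp at h1 ⊢
          linarith [h1]
    · rintro ⟨c, hc1, hcψ⟩
      have h1c : (0:ℝ) < 1 - c ^ 2 := by nlinarith [sq_abs c, abs_nonneg c]
      set θ := Real.arsinh (-c / Real.sqrt (1 - c ^ 2)) with hθdef
      have hsc : Real.sinh θ = -c / Real.sqrt (1 - c ^ 2) := Real.sinh_arsinh _
      have hsqpos : 0 < Real.sqrt (1 - c ^ 2) := Real.sqrt_pos.2 h1c
      have hcc : Real.cosh θ = 1 / Real.sqrt (1 - c ^ 2) := by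
        rw [hθdef, Real.cosh_arsinh]
        rw [div_pow, neg_sq, Real.sq_sqrt h1c.le]
        rw [show (1:ℝ) + c ^ 2 / (1 - c ^ 2) = (1 - c ^ 2)⁻¹ by field_simp; ring]
        rw [Real.sqrt_inv, one_div]
      have hkey : Real.sinh θ = -c * Real.cosh θ := by
        rw [hsc, hcc]; ring
      have hcosh := Real.cosh_pos θ
      set dd : ℝ → Fin 3 → ℝ := fun u =>
        (-(Real.cosh θ * τg u / r u)) • T u + (Real.cosh θ * kn u / r u) • B u +
          (-Real.sinh θ) • N u with hdd_def
      have hdd0 : ∀ s ∈ Set.Ioo a b, HasDerivAt dd 0 s := by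
        intro s hs
        have hk := hkn0 s hs
        have hrne := (hrpos s hs).ne'
        have hr2s := hr2 s hs
        have hsum : HasDerivAt (fun u => kn u ^ 2 + τg u ^ 2)
            (2 * kn s * deriv kn s + 2 * τg s * deriv τg s) s := by
          have h := ((hkn' s hs).pow 2).add ((hτg' s hs).pow 2)
          refine h.congr_deriv (Eq.symm ?_)
          norm_num
        have hrd : HasDerivAt r ((kn s * deriv kn s + τg s * deriv τg s) / r s) s := by
          have h := (Real.hasDerivAt_sqrt (hpos s hs).ne').comp s hsum
          refine h.congr_deriv (Eq.symm ?_)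
          rw [show Real.sqrt (kn s ^ 2 + τg s ^ 2) = r s from rfl]
          field_simp
        have hα := (((hτg' s hs).const_mul (Real.cosh θ)).div hrd hrne).neg
        have hβ := ((hkn' s hs).const_mul (Real.cosh θ)).div hrd hrne
        have h1 := hα.smul (hT' s hs)
        have h2 := hβ.smul (hB' s hs)
        have h3 := (hN' s hs).const_smul (-Real.sinh θ)
        have htot := (h1.add h2).add h3
        have hst : c * r s ^ 3 =
            deriv τg s * kn s - τg s * deriv kn s + kg s * r s ^ 2 := by
          have h := hstar s hs
          rwa [hcψ s hs] at h
        have hz1 : -((Real.cosh θ * deriv τg s * r s -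
              Real.cosh θ * τg s * ((kn s * deriv kn s + τg s * deriv τg s) / r s)) / r s ^ 2)
            + (Real.cosh θ * kn s / r s) * (-kg s) + (-Real.sinh θ) * kn s = 0 := by
          rw [hkey]
          field_simp
          linear_combination (Real.cosh θ * kn s) * hst +
            (-(Real.cosh θ * deriv τg s)) * hr2s
        have hz2 : (Real.cosh θ * deriv kn s * r s -
              Real.cosh θ * kn s * ((kn s * deriv kn s + τg s * deriv τg s) / r s)) / r s ^ 2
            + (-(Real.cosh θ * τg s / r s)) * kg s + (-Real.sinh θ) * τg s = 0 := by
          rw [hkey]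
          field_simp
          linear_combination (Real.cosh θ * τg s) * hst +
            (Real.cosh θ * deriv kn s) * hr2s
        have hz3 : (-(Real.cosh θ * τg s / r s)) * kn s
            + (Real.cosh θ * kn s / r s) * τg s = 0 := by
          ring
        refine htot.congr_deriv (Eq.symm ?_)
        funext j
        simp only [Pi.add_apply, Pi.smul_apply, smul_eq_mul, Pi.zero_apply, Pi.div_apply, Pi.neg_apply]
        linear_combination (-(T s j)) * hz1 + (-(B s j)) * hz2 + (-(N s j)) * hz3
      have hs₀ : (a + b) / 2 ∈ Set.Ioo a b := by constructor <;> linarith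
      have hconst : ∀ u ∈ Set.Ioo a b, dd u = dd ((a + b) / 2) := fun u hu =>
        const_of_hasDerivAt_zero hO hC hdd0 hu hs₀
      refine ⟨θ, dd ((a + b) / 2), ?_, ?_⟩
      · have hr2m := hr2 _ hs₀
        have hrnem := (hrpos _ hs₀).ne'
        have h := mdot_combo (T ((a+b)/2)) (B ((a+b)/2)) (N ((a+b)/2))
          (hTT _ hs₀) (hBB _ hs₀) (hNN _ hs₀) (hTB _ hs₀) (hTN _ hs₀) (hBN _ hs₀)
          (-(Real.cosh θ * τg ((a+b)/2) / r ((a+b)/2)))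
          (Real.cosh θ * kn ((a+b)/2) / r ((a+b)/2)) (-Real.sinh θ)
          (-(Real.cosh θ * τg ((a+b)/2) / r ((a+b)/2)))
          (Real.cosh θ * kn ((a+b)/2) / r ((a+b)/2)) (-Real.sinh θ)
        rw [hdd_def]
        simp only
        rw [h]
        have hcs := Real.cosh_sq_sub_sinh_sq θ
        field_simp
        linear_combination (-(Real.cosh θ ^ 2)) * hr2m + (r ((a+b)/2) ^ 2) * hcs
      · intro s hs
        rw [← hconst s hs]
        simp only [hdd_def]
        rw [mdot_expand_right (N s) (T s) (B s) (N s)]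
        have h1 : mdot (N s) (T s) = 0 := by rw [mdot_comm]; exact hTN s hs
        have h2 : mdot (N s) (B s) = 0 := by rw [mdot_comm]; exact hBN s hs
        rw [h1, h2, hNN s hs]
        ring
  · intro θ d hdd hNd s hs
    obtain ⟨hbne, hb2, hmain⟩ := key θ d hdd hNd s hs
    have hk := hkn0 s hs
    have hrne := (hrpos s hs).ne'
    have hr2s := hr2 s hs
    have hcosh := Real.cosh_pos θ
    have h1 : (ψ s * (mdot (B s) d * r s)) ^ 2 = (-(Real.sinh θ * kn s)) ^ 2 := by
      rw [hmain]
    have hbr : (mdot (B s) d * r s) ^ 2 = Real.cosh θ ^ 2 * kn s ^ 2 := by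
      rw [mul_pow, hr2s]
      exact hb2
    have h2 : ψ s ^ 2 * (Real.cosh θ ^ 2 * kn s ^ 2) = Real.sinh θ ^ 2 * kn s ^ 2 := by
      rw [← hbr]
      linear_combination h1
    have h3 : ψ s ^ 2 * Real.cosh θ ^ 2 = Real.sinh θ ^ 2 := by
      have h4 : ψ s ^ 2 * Real.cosh θ ^ 2 * kn s ^ 2 = Real.sinh θ ^ 2 * kn s ^ 2 := by
        linear_combination h2
      exact mul_right_cancel₀ (pow_ne_zero 2 hk) h4
    rw [Real.tanh_eq_sinh_div_cosh, div_pow, eq_div_iff (pow_ne_zero 2 hcosh.ne')]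
    linear_combination h3
end
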